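/- The Quantum MaxCut Hamiltonian H^QMC(G) preserves Hamming weight in the computational basis, and restricted to the Hamming-weight-k sector it is represented by the Laplacian matrix L(F_k(G)) of the k-th token graph of G. Consequently, the set of eigenvalues of H^QMC(G) equals the union over 0 ≤ k ≤ n of the eigenvalue sets of L(F_k(G)). -/

import Mathlib

open Matrix Finset

noncomputable section

/-- Computational basis states of `n` qubits. -/
abbrev QState (n : ℕ) := Fin n → Fin 2

/-- Pauli `X` matrix. -/
def pauliX : Matrix (Fin 2) (Fin 2) ℂ := !![0, 1; 1, 0]

/-- Pauli `Y` matrix. -/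
def pauliY : Matrix (Fin 2) (Fin 2) ℂ := !![0, -Complex.I; Complex.I, 0]

/-- Pauli `Z` matrix. -/
def pauliZ : Matrix (Fin 2) (Fin 2) ℂ := !![1, 0; 0, -1]

/-- The operator acting as `P` on qubit `i`, `Q` on qubit `j`, and the identity on all
other qubits of an `n`-qubit system. -/
def twoSite (n : ℕ) (i j : Fin n) (P Q : Matrix (Fin 2) (Fin 2) ℂ) :
    Matrix (QState n) (QState n) ℂ :=
  Matrix.of fun x y =>
    P (x i) (y i) * Q (x j) (y j) *
      ∏ l ∈ Finset.univ \ {i, j}, (if x l = y l then (1 : ℂ) else 0)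

/-- Quantum MaxCut term on the pair `(i,j)`: `(1/2)(I - XᵢXⱼ - YᵢYⱼ - ZᵢZⱼ)`. -/
def hQMC (n : ℕ) (i j : Fin n) : Matrix (QState n) (QState n) ℂ :=
  (1 / 2 : ℂ) • ((1 : Matrix (QState n) (QState n) ℂ)
    - twoSite n i j pauliX pauliX - twoSite n i j pauliY pauliY
    - twoSite n i j pauliZ pauliZ)

/-- XY term on the pair `(i,j)`: `(1/2)(I - XᵢXⱼ - YᵢYⱼ)`. -/
def hXY (n : ℕ) (i j : Fin n) : Matrix (QState n) (QState n) ℂ :=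
  (1 / 2 : ℂ) • ((1 : Matrix (QState n) (QState n) ℂ)
    - twoSite n i j pauliX pauliX - twoSite n i j pauliY pauliY)

/-- EPR term on the pair `(i,j)`: `(1/2)(I + XᵢXⱼ - YᵢYⱼ + ZᵢZⱼ)`. -/
def hEPR (n : ℕ) (i j : Fin n) : Matrix (QState n) (QState n) ℂ :=
  (1 / 2 : ℂ) • ((1 : Matrix (QState n) (QState n) ℂ)
    + twoSite n i j pauliX pauliX - twoSite n i j pauliY pauliY
    + twoSite n i j pauliZ pauliZ)

/-- Quantum MaxCut Hamiltonian of a weighted graph given by a symmetric weight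
function `w` (each edge is counted twice in the double sum, whence the factor `1/2`). -/
def HQMC (n : ℕ) (w : Fin n → Fin n → ℝ) : Matrix (QState n) (QState n) ℂ :=
  (1 / 2 : ℂ) • ∑ i, ∑ j, (w i j : ℂ) • hQMC n i j

/-- XY Hamiltonian of a weighted graph. -/
def HXY (n : ℕ) (w : Fin n → Fin n → ℝ) : Matrix (QState n) (QState n) ℂ :=
  (1 / 2 : ℂ) • ∑ i, ∑ j, (w i j : ℂ) • hXY n i j

/-- EPR Hamiltonian of a weighted graph. -/
def HEPR (n : ℕ) (w : Fin n → Fin n → ℝ) : Matrix (QState n) (QState n) ℂ :=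
  (1 / 2 : ℂ) • ∑ i, ∑ j, (w i j : ℂ) • hEPR n i j

/-- The largest (real) eigenvalue of a Hamiltonian: the supremum of the real numbers in
its complex spectrum. -/
def maxEigH {n : ℕ} (H : Matrix (QState n) (QState n) ℂ) : ℝ :=
  sSup {r : ℝ | (r : ℂ) ∈ spectrum ℂ H}

/-- Edge weight between vertices `A`, `B` of a token graph: nonzero exactly when the
symmetric difference of `A` and `B` is an edge `{a, b}` of `G` with `a ∈ A`, `b ∈ B`,
in which case it is `w a b`. -/
def tokenW {n : ℕ} (w : Fin n → Fin n → ℝ) (A B : Finset (Fin n)) : ℝ :=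
  ∑ a ∈ A \ B, ∑ b ∈ B \ A, if A \ {a} = B \ {b} then w a b else 0

/-- Vertices of the `k`-th token graph on `[n]`: the `k`-element subsets. -/
abbrev TokenVert (n k : ℕ) := {s : Finset (Fin n) // s.card = k}

/-- Weighted adjacency matrix of the `k`-th token graph `F_k(G)`. -/
def tokenA {n : ℕ} (w : Fin n → Fin n → ℝ) (k : ℕ) :
    Matrix (TokenVert n k) (TokenVert n k) ℝ :=
  Matrix.of fun A B => tokenW w A.1 B.1

/-- Weighted degree matrix of `F_k(G)`. -/
def tokenD {n : ℕ} (w : Fin n → Fin n → ℝ) (k : ℕ) :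
    Matrix (TokenVert n k) (TokenVert n k) ℝ :=
  Matrix.diagonal fun A => ∑ B : TokenVert n k, tokenW w A.1 B.1

/-- Weighted Laplacian of `F_k(G)`. -/
def tokenL {n : ℕ} (w : Fin n → Fin n → ℝ) (k : ℕ) :
    Matrix (TokenVert n k) (TokenVert n k) ℝ :=
  tokenD w k - tokenA w k

/-- Weighted signless Laplacian of `F_k(G)`. -/
def tokenQ {n : ℕ} (w : Fin n → Fin n → ℝ) (k : ℕ) :
    Matrix (TokenVert n k) (TokenVert n k) ℝ :=
  tokenD w k + tokenA w k

/-- Hamming weight of a computational basis state. -/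
def hammingWt {n : ℕ} (x : QState n) : ℕ := (Finset.univ.filter fun i => x i = 1).card

/-- The computational basis state associated with a subset `A ⊆ [n]`. -/
def chi {n : ℕ} (A : Finset (Fin n)) : QState n := fun i => if i ∈ A then 1 else 0

/-!
The two-qubit term `(I - XX - YY - ZZ)/2` equals `I - SWAP`, so `H^QMC(G)` is
`(1/2) ∑ w_ij (I - P_(i j))`, where `P_(i j)` permutes the qubits `i` and `j`. Permuting qubits
preserves Hamming weight, and on the basis state of a set `A` the transposition `(i j)` acts
trivially unless exactly one of `i, j` lies in `A`, in which case it moves one token across an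
edge of `G`. Hence the weight-`k` block of `H^QMC(G)` is `L(F_k(G))`. Reindexing the
computational basis by sectors makes `H^QMC(G)` block diagonal, and the blocks are real
symmetric, so their complex spectra are the images of their real ones.
-/

open Equiv

theorem funext_iff_pair {α β : Type*} {f g : α → β} (i j : α) :
    f = g ↔ f i = g i ∧ f j = g j ∧ ∀ l, l ≠ i → l ≠ j → f l = g l := by
  refine ⟨by rintro rfl; simp, fun ⟨hi, hj, hoff⟩ => funext fun l => ?_⟩
  obtain rfl | hli := eq_or_ne l i
  · exact hi
  obtain rfl | hlj := eq_or_ne l j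
  · exact hj
  exact hoff l hli hlj

namespace Finset

variable {α : Type*} [DecidableEq α]

theorem map_swap_eq_self {s : Finset α} {i j : α} (h : i ∈ s ↔ j ∈ s) :
    s.map (swap i j).toEmbedding = s := by
  ext l
  rw [mem_map_equiv, symm_swap, swap_apply_def]
  split_ifs with hli hlj
  · rw [hli, h]
  · rw [hlj, h]
  · rfl

theorem eq_map_swap_iff {s t : Finset α} {a b : α} (ha : a ∈ s) (hb : b ∉ s) :
    t = s.map (swap a b).toEmbedding ↔ a ∉ t ∧ b ∈ t ∧ s \ {a} = t \ {b} := by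
  have hab : a ≠ b := fun h => hb (h ▸ ha)
  have hmap : s.map (swap a b).toEmbedding = insert b (s.erase a) := by
    ext l
    rw [mem_map_equiv, symm_swap, mem_insert, mem_erase, swap_apply_def]
    split_ifs with hla hlb
    · simp [hla, hab, hb]
    · simp [hlb, ha]
    · simp [hla, hlb]
  have hb' : b ∉ s.erase a := fun h => hb (mem_of_mem_erase h)
  rw [hmap, sdiff_singleton_eq_erase, sdiff_singleton_eq_erase]
  constructor
  · rintro rfl
    exact ⟨by simp [hab], mem_insert_self b _, (erase_insert hb').symm⟩
  · rintro ⟨-, hbt, hst⟩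
    rw [hst, insert_erase hbt]

theorem sum_sum_eq_two_nsmul_sum_sum_compl [Fintype α] {M : Type*} [AddCommMonoid M]
    (s : Finset α) (g : α → α → M) (hg : ∀ i j, g i j = g j i)
    (h0 : ∀ i j, (i ∈ s ↔ j ∈ s) → g i j = 0) :
    ∑ i, ∑ j, g i j = 2 • ∑ i ∈ s, ∑ j ∈ sᶜ, g i j := by
  have hss : ∑ i ∈ s, ∑ j ∈ s, g i j = 0 :=
    sum_eq_zero fun i hi => sum_eq_zero fun j hj => h0 i j (iff_of_true hi hj)
  have hcc : ∑ i ∈ sᶜ, ∑ j ∈ sᶜ, g i j = 0 :=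
    sum_eq_zero fun i hi => sum_eq_zero fun j hj =>
      h0 i j (iff_of_false (mem_compl.1 hi) (mem_compl.1 hj))
  have hcs : ∑ i ∈ sᶜ, ∑ j ∈ s, g i j = ∑ i ∈ s, ∑ j ∈ sᶜ, g i j := by
    rw [sum_comm]
    exact sum_congr rfl fun i _ => sum_congr rfl fun j _ => hg j i
  simp only [← sum_add_sum_compl s, sum_add_distrib, hss, hcc, hcs, two_nsmul, zero_add, add_zero]

end Finset

namespace Matrix

section BlockDiagonal

variable {o R : Type*} [Fintype o] [DecidableEq o] {m' : o → Type*} [∀ i, Fintype (m' i)]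

theorem blockDiag'_mul_blockDiagonal' [NonUnitalNonAssocSemiring R]
    (N : Matrix (Σ i, m' i) (Σ i, m' i) R) (M : ∀ i, Matrix (m' i) (m' i) R) (k : o) :
    blockDiag' (N * blockDiagonal' M) k = blockDiag' N k * M k := by
  ext i j
  rw [blockDiag'_apply, mul_apply, Fintype.sum_sigma, Finset.sum_eq_single k]
  · simp [mul_apply, blockDiag'_apply, blockDiagonal'_apply_eq]
  · intro l _ hl
    simp [blockDiagonal'_apply_ne M _ _ hl]
  · simp

variable [∀ i, DecidableEq (m' i)] [CommRing R]

theorem isUnit_blockDiagonal'_iff (M : ∀ i, Matrix (m' i) (m' i) R) :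
    IsUnit (blockDiagonal' M) ↔ ∀ k, IsUnit (M k) := by
  refine ⟨fun h k => ?_, fun h => (Pi.isUnit_iff.2 h).map (blockDiagonal'RingHom m' R)⟩
  obtain ⟨N, hN⟩ := h.exists_left_inv
  refine IsUnit.of_mul_eq_one_right (blockDiag' N k) ?_
  rw [← blockDiag'_mul_blockDiagonal', hN, blockDiag'_one, Pi.one_apply]

theorem spectrum_blockDiagonal' (M : ∀ i, Matrix (m' i) (m' i) R) :
    spectrum R (blockDiagonal' M) = ⋃ k, spectrum R (M k) := by
  have hres (r : R) : algebraMap R _ r - blockDiagonal' M =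
      blockDiagonal' fun k => algebraMap R _ r - M k := by
    simp only [Algebra.algebraMap_eq_smul_one]
    rw [← blockDiagonal'_one, ← blockDiagonal'_smul, ← blockDiagonal'_sub]
    rfl
  ext r
  simp only [Set.mem_iUnion, spectrum.mem_iff, hres, isUnit_blockDiagonal'_iff, not_forall]

end BlockDiagonal

theorem spectrum_submatrix_equiv {m l R : Type*} [Fintype m] [DecidableEq m] [Fintype l]
    [DecidableEq l] [CommRing R] (e : m ≃ l) (A : Matrix l l R) :
    spectrum R (A.submatrix e e) = spectrum R A :=
  AlgEquiv.spectrum_eq (reindexAlgEquiv R R e.symm) A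

theorem spectrum_map_ofReal {m : Type*} [Fintype m] [DecidableEq m] {M : Matrix m m ℝ}
    (hM : M.IsSymm) : spectrum ℂ (M.map Complex.ofReal) = Complex.ofReal '' spectrum ℝ M := by
  have hB : (M.map Complex.ofReal).IsHermitian := by
    rw [IsHermitian, ← conjTranspose_map _ (fun _ => (Complex.conj_ofReal _).symm),
      conjTranspose_eq_transpose_of_trivial, hM.eq]
  have hreal (r : ℝ) :
      (r : ℂ) ∈ spectrum ℂ (M.map Complex.ofReal) ↔ r ∈ spectrum ℝ M := by
    have hres : algebraMap ℂ _ (r : ℂ) - M.map Complex.ofReal =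
        Complex.ofRealHom.mapMatrix (algebraMap ℝ (Matrix m m ℝ) r - M) := by
      ext i j
      by_cases hij : i = j <;> simp [algebraMap_matrix_apply, hij]
    rw [spectrum.mem_iff, spectrum.mem_iff, hres, isUnit_iff_isUnit_det, isUnit_iff_isUnit_det,
      ← RingHom.map_det, isUnit_iff_ne_zero, isUnit_iff_ne_zero, map_ne_zero]
  ext z
  constructor
  · intro hz
    obtain ⟨r, -, rfl⟩ := hB.spectrum_eq_image_range ▸ hz
    exact ⟨r, (hreal r).1 hz, rfl⟩
  · rintro ⟨r, hr, rfl⟩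
    exact (hreal r).2 hr

end Matrix

-- `XX + YY + ZZ = 2 SWAP - I`, entrywise.
theorem heisenberg_exchange_apply (a b c d : Fin 2) :
    pauliX a c * pauliX b d + pauliY a c * pauliY b d + pauliZ a c * pauliZ b d
      = 2 * (if c = b ∧ d = a then 1 else 0) - (if a = c ∧ b = d then 1 else 0) := by
  fin_cases a <;> fin_cases b <;> fin_cases c <;> fin_cases d <;>
    norm_num [pauliX, pauliY, pauliZ]

variable {n : ℕ}

theorem twoSite_apply (i j : Fin n) (P Q : Matrix (Fin 2) (Fin 2) ℂ) (x y : QState n) :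
    twoSite n i j P Q x y =
      if ∀ l, l ≠ i → l ≠ j → x l = y l then P (x i) (y i) * Q (x j) (y j) else 0 := by
  simp [twoSite, prod_boole]

theorem hQMC_apply (i j : Fin n) (x y : QState n) :
    hQMC n i j x y = (if x = y then 1 else 0) - (if y = x ∘ swap i j then 1 else 0) := by
  have hswap : y = x ∘ swap i j ↔
      y i = x j ∧ y j = x i ∧ ∀ l, l ≠ i → l ≠ j → x l = y l := by
    rw [funext_iff_pair i j]
    refine and_congr (by simp) (and_congr (by simp) (forall_congr' fun l => ?_))
    refine imp_congr_right fun hli => imp_congr_right fun hlj => ?_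
    rw [Function.comp_apply, swap_apply_of_ne_of_ne hli hlj, eq_comm]
  simp only [hQMC, Matrix.smul_apply, Matrix.sub_apply, Matrix.one_apply, twoSite_apply,
    smul_eq_mul]
  rw [if_congr (funext_iff_pair i j) rfl rfl, if_congr hswap rfl rfl]
  by_cases hoff : ∀ l, l ≠ i → l ≠ j → x l = y l
  · simp only [eq_true hoff, and_true, if_true]
    linear_combination (-1 / 2 : ℂ) * heisenberg_exchange_apply (x i) (x j) (y i) (y j)
  · simp [hoff]

theorem HQMC_apply (w : Fin n → Fin n → ℝ) (x y : QState n) :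
    HQMC n w x y = 1 / 2 * ∑ i, ∑ j, (w i j : ℂ) *
      ((if x = y then 1 else 0) - (if y = x ∘ swap i j then 1 else 0)) := by
  simp [HQMC, Matrix.sum_apply, hQMC_apply]

theorem hammingWt_comp_perm (x : QState n) (σ : Perm (Fin n)) :
    hammingWt (x ∘ σ) = hammingWt x :=
  Finset.card_equiv σ (by simp)

theorem HQMC_apply_eq_zero_of_hammingWt_ne (w : Fin n → Fin n → ℝ) {x y : QState n}
    (h : hammingWt x ≠ hammingWt y) : HQMC n w x y = 0 := by
  have hxy : x ≠ y := fun e => h (congrArg hammingWt e)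
  have hswap (i j : Fin n) : y ≠ x ∘ swap i j := fun e => h (by rw [e, hammingWt_comp_perm])
  simp [HQMC_apply, hxy, hswap]

def finsetEquivQState (n : ℕ) : Finset (Fin n) ≃ QState n where
  toFun := chi
  invFun x := {i | x i = 1}
  left_inv A := by ext; simp [chi]
  right_inv x := funext fun l => by
    by_cases h : x l = 1 <;> simp [chi, h]
    omega

theorem chi_injective : Function.Injective (chi (n := n)) :=
  (finsetEquivQState n).injective

theorem chi_comp_swap (A : Finset (Fin n)) (i j : Fin n) :
    chi A ∘ swap i j = chi (A.map (swap i j).toEmbedding) := by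
  funext l
  simp [chi, mem_map_equiv]

theorem hammingWt_chi (A : Finset (Fin n)) : hammingWt (chi A) = A.card := by
  simp [hammingWt, chi]

theorem tokenW_eq_sum_compl (w : Fin n → Fin n → ℝ) (A B : Finset (Fin n)) :
    tokenW w A B =
      ∑ a ∈ A, ∑ b ∈ Aᶜ, if B = A.map (swap a b).toEmbedding then w a b else 0 := by
  have hBA : B \ A = Aᶜ.filter (· ∈ B) := by ext; simp [and_comm]
  rw [tokenW, sdiff_eq_filter, sum_filter, hBA]
  refine sum_congr rfl fun a ha => ?_
  rw [sum_filter, ← sum_const_zero (s := Aᶜ), ← sum_ite_irrel, sum_const_zero]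
  refine sum_congr rfl fun b hb => ?_
  simp only [eq_map_swap_iff ha (mem_compl.1 hb), ite_and]

theorem sum_tokenW {w : Fin n → Fin n → ℝ} {k : ℕ} {A : Finset (Fin n)} (hA : A.card = k) :
    ∑ C : TokenVert n k, tokenW w A C = ∑ a ∈ A, ∑ b ∈ Aᶜ, w a b := by
  simp_rw [tokenW_eq_sum_compl]
  rw [sum_comm]
  refine sum_congr rfl fun a _ => ?_
  rw [sum_comm]
  refine sum_congr rfl fun b _ => ?_
  have hcard : (A.map (swap a b).toEmbedding).card = k := by rw [card_map, hA]
  rw [Fintype.sum_eq_single (⟨_, hcard⟩ : TokenVert n k)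
    fun C hC => if_neg fun h => hC (Subtype.ext h), if_pos rfl]

theorem tokenL_apply {w : Fin n → Fin n → ℝ} {k : ℕ} {A B : Finset (Fin n)}
    (hA : A.card = k) (hB : B.card = k) :
    tokenL w k ⟨A, hA⟩ ⟨B, hB⟩ =
      (if A = B then ∑ a ∈ A, ∑ b ∈ Aᶜ, w a b else 0) - tokenW w A B := by
  simp [tokenL, tokenD, tokenA, diagonal_apply, sum_tokenW hA]

theorem tokenW_comm {w : Fin n → Fin n → ℝ} (hsymm : ∀ i j, w i j = w j i)
    (A B : Finset (Fin n)) :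
    tokenW w A B = tokenW w B A := by
  rw [tokenW, tokenW, sum_comm]
  refine sum_congr rfl fun b _ => sum_congr rfl fun a _ => ?_
  rw [hsymm, if_congr eq_comm rfl rfl]

theorem tokenL_isSymm {w : Fin n → Fin n → ℝ} (hsymm : ∀ i j, w i j = w j i) (k : ℕ) :
    (tokenL w k).IsSymm :=
  (isSymm_diagonal _).sub (IsSymm.ext fun A B => by simp [tokenA, tokenW_comm hsymm])

theorem HQMC_chi_chi {w : Fin n → Fin n → ℝ} (hsymm : ∀ i j, w i j = w j i)
    (A B : Finset (Fin n)) :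
    HQMC n w (chi A) (chi B) =
      (((if A = B then ∑ a ∈ A, ∑ b ∈ Aᶜ, w a b else 0) - tokenW w A B : ℝ) : ℂ) := by
  set g : Fin n → Fin n → ℂ := fun i j =>
    w i j * ((if A = B then 1 else 0) - if B = A.map (swap i j).toEmbedding then 1 else 0)
  have hg : ∀ i j, g i j = g j i := fun i j => by simp only [g, hsymm i j, Equiv.swap_comm]
  have h0 : ∀ i j, (i ∈ A ↔ j ∈ A) → g i j = 0 := fun i j h => by
    simp only [g, map_swap_eq_self h, if_congr eq_comm rfl rfl, sub_self, mul_zero]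
  calc HQMC n w (chi A) (chi B) = 1 / 2 * ∑ i, ∑ j, g i j := by
        simp only [HQMC_apply, chi_comp_swap, chi_injective.eq_iff, g]
    _ = ∑ a ∈ A, ∑ b ∈ Aᶜ, g a b := by
        rw [sum_sum_eq_two_nsmul_sum_sum_compl A g hg h0, two_nsmul]; ring
    _ = _ := by
        simp only [g, tokenW_eq_sum_compl, mul_sub, sum_sub_distrib, mul_ite, mul_one, mul_zero]
        split_ifs <;> push_cast [apply_ite (fun r : ℝ => (r : ℂ)), sum_const_zero] <;> rfl

def sectorEquiv (n : ℕ) : (Σ k : Fin (n + 1), TokenVert n k) ≃ QState n :=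
  ((sigmaCongrRight fun k => subtypeEquivRight fun s => by simp [Fin.ext_iff]).trans
    (sigmaFiberEquiv fun s : Finset (Fin n) =>
      (⟨s.card, Nat.lt_succ_of_le (s.card_le_univ.trans_eq (Fintype.card_fin n))⟩ :
        Fin (n + 1)))).trans
    (finsetEquivQState n)

theorem HQMC_submatrix_sectorEquiv {w : Fin n → Fin n → ℝ} (hsymm : ∀ i j, w i j = w j i) :
    (HQMC n w).submatrix (sectorEquiv n) (sectorEquiv n) =
      blockDiagonal' fun k : Fin (n + 1) => (tokenL w k).map Complex.ofReal := by
  ext ⟨k, A, hA⟩ ⟨l, B, hB⟩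
  change HQMC n w (chi A) (chi B) = _
  by_cases hkl : k = l
  · subst hkl
    rw [blockDiagonal'_apply_eq, map_apply, HQMC_chi_chi hsymm, tokenL_apply]
  · rw [blockDiagonal'_apply_ne _ _ _ hkl]
    refine HQMC_apply_eq_zero_of_hammingWt_ne w ?_
    rw [hammingWt_chi, hammingWt_chi, hA, hB]
    exact fun h => hkl (Fin.ext h)

theorem HQMC_eq_directSum_tokenL_general (n : ℕ) (w : Fin n → Fin n → ℝ)
    (hsymm : ∀ i j, w i j = w j i) :
    (∀ x y : QState n, hammingWt x ≠ hammingWt y → HQMC n w x y = 0) ∧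
    (∀ (k : ℕ) (A B : Finset (Fin n)) (hA : A.card = k) (hB : B.card = k),
      HQMC n w (chi A) (chi B) = ((tokenL w k ⟨A, hA⟩ ⟨B, hB⟩ : ℝ) : ℂ)) ∧
    spectrum ℂ (HQMC n w)
      = ⋃ k : Fin (n + 1), (fun r : ℝ => (r : ℂ)) '' spectrum ℝ (tokenL w k.1) := by
  refine ⟨fun x y => HQMC_apply_eq_zero_of_hammingWt_ne w,
    fun k A B hA hB => by rw [HQMC_chi_chi hsymm, tokenL_apply], ?_⟩
  rw [← spectrum_submatrix_equiv (sectorEquiv n), HQMC_submatrix_sectorEquiv hsymm,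
    spectrum_blockDiagonal']
  exact Set.iUnion_congr fun k => spectrum_map_ofReal (tokenL_isSymm hsymm k)

/-- The Quantum MaxCut Hamiltonian preserves Hamming weight in the computational basis;
its restriction to the Hamming-weight-`k` sector is the Laplacian `L(F_k(G))` of the
`k`-th token graph; and consequently its eigenvalue set is the union over `0 ≤ k ≤ n` of
the eigenvalue sets of the `L(F_k(G))`. -/
theorem HQMC_eq_directSum_tokenL (n : ℕ) (w : Fin n → Fin n → ℝ)
    (hsymm : ∀ i j, w i j = w j i) (hnonneg : ∀ i j, 0 ≤ w i j)
    (hdiag : ∀ i, w i i = 0) :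
    (∀ x y : QState n, hammingWt x ≠ hammingWt y → HQMC n w x y = 0) ∧
    (∀ (k : ℕ) (A B : Finset (Fin n)) (hA : A.card = k) (hB : B.card = k),
      HQMC n w (chi A) (chi B) = ((tokenL w k ⟨A, hA⟩ ⟨B, hB⟩ : ℝ) : ℂ)) ∧
    spectrum ℂ (HQMC n w)
      = ⋃ k : Fin (n + 1), (fun r : ℝ => (r : ℂ)) '' spectrum ℝ (tokenL w k.1) :=
  HQMC_eq_directSum_tokenL_general n w hsymm
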